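/- For the 6×6 complex matrices S with rows (1,−1,1,r₁,r₂,r₃), (−1,1,−1,−r₂,−r₃,−r₁), (1,−1,1,r₃,r₁,r₂), (r₁,−r₂,r₃,1,1,1), (r₂,−r₃,r₁,1,1,1), (r₃,−r₁,r₂,1,1,1) and T = diag(1, e^{2πi/3}, e^{4πi/3}, e^{−4πi/9}, e^{8πi/9}, e^{2πi/9}), one has p₊ · p₋ = 9, where p₊ = Σ_j S_{0j}² T_{jj} and p₋ = Σ_j S_{0j}² T_{jj}^{−1}. -/

import Mathlib

/-- `α = e^{iπ/9}`. -/
noncomputable def α : ℂ := Complex.exp (Real.pi * Complex.I / 9)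

noncomputable def r₁ : ℂ := -α - α ^ 2 + α ^ 5
noncomputable def r₂ : ℂ := α + α ^ 2 - α ^ 4
noncomputable def r₃ : ℂ := α ^ 4 - α ^ 5

/-- The 6×6 matrix with rows `(1,−1,1,r₁,r₂,r₃)`, `(−1,1,−1,−r₂,−r₃,−r₁)`,
`(1,−1,1,r₃,r₁,r₂)`, `(r₁,−r₂,r₃,1,1,1)`, `(r₂,−r₃,r₁,1,1,1)`, `(r₃,−r₁,r₂,1,1,1)`. -/
noncomputable def S : Matrix (Fin 6) (Fin 6) ℂ :=
  !![1, -1, 1, r₁, r₂, r₃;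
     -1, 1, -1, -r₂, -r₃, -r₁;
     1, -1, 1, r₃, r₁, r₂;
     r₁, -r₂, r₃, 1, 1, 1;
     r₂, -r₃, r₁, 1, 1, 1;
     r₃, -r₁, r₂, 1, 1, 1]

/-- `T = diag(1, e^{2πi/3}, e^{4πi/3}, e^{−4πi/9}, e^{8πi/9}, e^{2πi/9})`. -/
noncomputable def T : Matrix (Fin 6) (Fin 6) ℂ :=
  Matrix.diagonal ![1, Complex.exp (2 * Real.pi * Complex.I / 3),
    Complex.exp (4 * Real.pi * Complex.I / 3),
    Complex.exp (-4 * Real.pi * Complex.I / 9),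
    Complex.exp (8 * Real.pi * Complex.I / 9),
    Complex.exp (2 * Real.pi * Complex.I / 9)]

/-- `p₊ = Σ_j S_{0j}² T_{jj}`. -/
noncomputable def pPlus : ℂ := ∑ j : Fin 6, (S 0 j) ^ 2 * T j j

/-- `p₋ = Σ_j S_{0j}² T_{jj}⁻¹`. -/
noncomputable def pMinus : ℂ := ∑ j : Fin 6, (S 0 j) ^ 2 * (T j j)⁻¹

/-!
`α` is a primitive 18th root of unity, so it is a root of the cyclotomic polynomial
`Φ₁₈ = X ^ 6 - X ^ 3 + 1` (it divides `X ^ 9 + 1 = (X ^ 3 + 1) Φ₁₈` but `α ^ 3 ≠ -1`), and each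
`T j j` is a power of `α`. Hence `p₊` and `p₋` are polynomials in `α`, which reduce modulo `Φ₁₈` to
`p₊ = 3 α ^ 12` and `p₋ = 3 α ^ 6`; their product is `9 α ^ 18 = 9`.
-/

open Complex
open scoped Real

theorem isPrimitiveRoot_α : IsPrimitiveRoot α 18 := by
  rw [α]
  convert isPrimitiveRoot_exp 18 (by norm_num) using 2
  push_cast
  ring

theorem α_pow_nine : α ^ 9 = -1 := by
  rw [α, ← exp_nat_mul, ← exp_pi_mul_I]
  congr 1
  push_cast
  ring

theorem α_pow_six_sub_pow_three_add_one : α ^ 6 - α ^ 3 + 1 = 0 := by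
  have hα3 : α ^ 3 + 1 ≠ 0 := fun h ↦ by
    have h6 : α ^ 6 = 1 := by linear_combination (α ^ 3 - 1) * h
    exact absurd ((isPrimitiveRoot_α.pow_eq_one_iff_dvd 6).1 h6) (by norm_num)
  have h9 : (α ^ 3 + 1) * (α ^ 6 - α ^ 3 + 1) = 0 := by linear_combination α_pow_nine
  exact (mul_eq_zero.1 h9).resolve_left hα3

theorem exp_eq_α_pow {z : ℂ} (n : ℕ) (k : ℤ) (h : z = n * (π * I / 9) + k * (2 * π * I)) :
    exp z = α ^ n := by
  rw [h, exp_add, exp_int_mul_two_pi_mul_I, mul_one, exp_nat_mul, α]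

def tExponent : Fin 6 → ℕ := ![0, 6, 12, 14, 8, 2]

theorem T_apply_self (j : Fin 6) : T j j = α ^ tExponent j := by
  fin_cases j
  · simp [T, tExponent]
  · simpa [T, tExponent] using exp_eq_α_pow 6 0 (by push_cast; ring)
  · simpa [T, tExponent] using exp_eq_α_pow 12 0 (by push_cast; ring)
  · simpa [T, tExponent] using exp_eq_α_pow 14 (-1) (by push_cast; ring)
  · simpa [T, tExponent] using exp_eq_α_pow 8 0 (by push_cast; ring)
  · simpa [T, tExponent] using exp_eq_α_pow 2 0 (by push_cast; ring)

theorem inv_α_pow {n : ℕ} (hn : n ≤ 18) : (α ^ n)⁻¹ = α ^ (18 - n) := by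
  refine inv_eq_of_mul_eq_one_right ?_
  rw [← pow_add, Nat.add_sub_cancel' hn, isPrimitiveRoot_α.pow_eq_one]

theorem inv_T_apply_self (j : Fin 6) : (T j j)⁻¹ = α ^ (18 - tExponent j) := by
  rw [T_apply_self, inv_α_pow]
  fin_cases j <;> decide

theorem pPlus_eq : pPlus = 3 * α ^ 12 := by
  simp only [pPlus, Fin.sum_univ_six, T_apply_self, tExponent, S, Matrix.of_apply,
    Matrix.cons_val, r₁, r₂, r₃]
  linear_combination (1 + α ^ 3 + α ^ 6 + 2 * α ^ 10 - α ^ 12 - 2 * α ^ 14 - α ^ 15 + α ^ 18) *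
    α_pow_six_sub_pow_three_add_one

theorem pMinus_eq : pMinus = 3 * α ^ 6 := by
  simp only [pMinus, Fin.sum_univ_six, inv_T_apply_self, tExponent, S, Matrix.of_apply,
    Matrix.cons_val, r₁, r₂, r₃]
  linear_combination (1 + α ^ 3 - α ^ 6 + 2 * α ^ 7 + α ^ 8 - 2 * α ^ 9 - α ^ 11 + α ^ 12 + α ^ 15 -
    2 * α ^ 16 + α ^ 17 + α ^ 18 - 2 * α ^ 19 + α ^ 20) * α_pow_six_sub_pow_three_add_one +
    isPrimitiveRoot_α.pow_eq_one

theorem pPlus_mul_pMinus : pPlus * pMinus = 9 := by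
  rw [pPlus_eq, pMinus_eq]
  linear_combination 9 * isPrimitiveRoot_α.pow_eq_one
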